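/- arXiv:1609.00606 — 2 statements merged into one kernel-verified Lean document; each statement's English description precedes it below -/
import Mathlib

section
/- Assume the right-sided M structure. Let c ∈ {0,1} with P(C=c) > 0. Then cov(X, Y | C=c) = [ P(Y=1 | B=1) − P(Y=1 | B=0) ] · cov(X, B | C=c); that is, the extended collider bias on the covariance scale equals the embedded V-bias cov(X, B | C=c) multiplied by the risk difference representing the effect of B on Y. -/
/-!
Given `C = c`, the law of `(X, B, Y)` still factorizes as `P(X, B) · P(Y | B)`: the constant
`P(X) P(B) P(C | X, B)` in front of `P(Y | B)` must be `P(X, B, C)`, because the conditional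
probabilities of `Y` sum to one. Under any law in which `Y` is independent of `X` given `B`, the
probability that `Y = 1` given `(X, B)` is the affine function `q₀ + (q₁ - q₀) B` of `B`, where
`q_b = P(Y = 1 | B = b)`, so `cov(X, Y) = (q₁ - q₀) cov(X, B)`.
-/

open MeasureTheory ProbabilityTheory

variable {Ω : Type*} [MeasurableSpace Ω]

/-- The event that the random variable `X` takes the value `x`. -/
def ev (X : Ω → ℝ) (x : ℝ) : Set Ω := {ω | X ω = x}

/-- The probability of an event, as a real number. -/
noncomputable def pr (P : Measure Ω) (s : Set Ω) : ℝ := (P s).toReal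

/-- The conditional probability `P(s | t)`, as a real number. -/
noncomputable def cpr (P : Measure Ω) (s t : Set Ω) : ℝ := pr (P[|t]) s

/-- The covariance of two real-valued random variables. -/
noncomputable def rcov (P : Measure Ω) (X Y : Ω → ℝ) : ℝ :=
  ∫ ω, (X ω - ∫ ω', X ω' ∂P) * (Y ω - ∫ ω', Y ω' ∂P) ∂P

/-- The conditional covariance of two real-valued random variables given an event. -/
noncomputable def covCond (P : Measure Ω) (X Y : Ω → ℝ) (t : Set Ω) : ℝ :=
  rcov (P[|t]) X Y

/-- The conditional variance of a real-valued random variable given an event. -/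
noncomputable def varCond (P : Measure Ω) (X : Ω → ℝ) (t : Set Ω) : ℝ :=
  covCond P X X t

/-- A measurable `{0,1}`-valued random variable. -/
def IsBin (X : Ω → ℝ) : Prop := Measurable X ∧ ∀ ω, X ω = 0 ∨ X ω = 1

open Set

variable {P : Measure Ω} {X B Y : Ω → ℝ}

namespace IsBin

lemma measurableSet_ev (hX : IsBin X) (x : ℝ) : MeasurableSet (ev X x) :=
  hX.1 (measurableSet_singleton x)

lemma ev_zero_eq_compl (hX : IsBin X) : ev X 0 = (ev X 1)ᶜ := by
  ext ω
  rcases hX.2 ω with h | h <;> simp [ev, h]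

lemma eq_indicator (hX : IsBin X) : X = (ev X 1).indicator 1 := by
  funext ω
  rcases hX.2 ω with h | h <;> simp [ev, h]

lemma mul_eq_indicator (hX : IsBin X) (hY : IsBin Y) :
    X * Y = (ev X 1 ∩ ev Y 1).indicator 1 := by
  funext ω
  rcases hX.2 ω with h | h <;> rcases hY.2 ω with h' | h' <;> simp [ev, h, h']

lemma memLp [IsFiniteMeasure P] (hX : IsBin X) (p : ENNReal) : MemLp X p P := by
  convert memLp_indicator_const p (hX.measurableSet_ev 1) (1 : ℝ) (Or.inr (measure_ne_top P _))
  exact hX.eq_indicator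

lemma integral_eq_pr (hX : IsBin X) : ∫ ω, X ω ∂P = pr P (ev X 1) := by
  conv_lhs => rw [hX.eq_indicator]
  exact integral_indicator_one (hX.measurableSet_ev 1)

lemma rcov_eq [IsProbabilityMeasure P] (hX : IsBin X) (hY : IsBin Y) :
    rcov P X Y = pr P (ev X 1 ∩ ev Y 1) - pr P (ev X 1) * pr P (ev Y 1) := by
  change cov[X, Y; P] = _
  rw [covariance_eq_sub (hX.memLp 2) (hY.memLp 2), hX.mul_eq_indicator hY,
    integral_indicator_one ((hX.measurableSet_ev 1).inter (hY.measurableSet_ev 1)),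
    hX.integral_eq_pr, hY.integral_eq_pr]
  rfl

lemma pr_eq_add [IsFiniteMeasure P] (hX : IsBin X) (s : Set Ω) :
    pr P s = pr P (s ∩ ev X 0) + pr P (s ∩ ev X 1) := by
  rw [hX.ev_zero_eq_compl, ← sdiff_eq, add_comm]
  exact (measureReal_inter_add_sdiff (hX.measurableSet_ev 1)).symm

lemma pr_ev_zero_add_pr_ev_one [IsProbabilityMeasure P] (hX : IsBin X) :
    pr P (ev X 0) + pr P (ev X 1) = 1 := by
  simpa [pr] using (hX.pr_eq_add (P := P) univ).symm

end IsBin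

lemma pr_cond {T : Set Ω} (hT : MeasurableSet T) (s : Set Ω) :
    pr (P[|T]) s = pr P (T ∩ s) / pr P T := by
  rw [pr, cond_apply hT, ENNReal.toReal_mul, ENNReal.toReal_inv, div_eq_inv_mul]
  rfl

lemma pr_cond_inter_eq_mul {T s E : Set Ω} {r : ℝ} (hT : MeasurableSet T)
    (h : pr P (s ∩ T ∩ E) = pr P (s ∩ T) * r) : pr (P[|T]) (s ∩ E) = pr (P[|T]) s * r := by
  rw [pr_cond hT, pr_cond hT, ← inter_assoc, inter_comm T s, h, mul_div_right_comm]

lemma pr_inter_ev_eq_pr_mul_cpr [IsFiniteMeasure P] (hY : IsBin Y) {A t : Set Ω} {a : ℝ}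
    (h : ∀ y : ℝ, (y = 0 ∨ y = 1) → pr P (A ∩ ev Y y) = a * cpr P (ev Y y) t)
    {y : ℝ} (hy : y = 0 ∨ y = 1) : pr P (A ∩ ev Y y) = pr P A * cpr P (ev Y y) t := by
  by_cases ht : P t = 0
  · rw [h y hy]
    simp [cpr, pr, cond_eq_zero_of_meas_eq_zero ht]
  · have := cond_isProbabilityMeasure (μ := P) ht
    have hA : pr P A = a := by
      rw [hY.pr_eq_add A, h 0 (Or.inl rfl), h 1 (Or.inr rfl), ← mul_add, cpr, cpr,
        hY.pr_ev_zero_add_pr_ev_one, mul_one]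
    rw [h y hy, hA]

lemma pr_inter_eq_mul_of_forall_ev [IsFiniteMeasure P] (hX : IsBin X) {s E : Set Ω} {r : ℝ}
    (h : ∀ x : ℝ, (x = 0 ∨ x = 1) → pr P (ev X x ∩ s ∩ E) = pr P (ev X x ∩ s) * r) :
    pr P (s ∩ E) = pr P s * r := by
  have hx : ∀ x : ℝ, (x = 0 ∨ x = 1) → pr P (s ∩ E ∩ ev X x) = pr P (s ∩ ev X x) * r := by
    intro x hx
    rw [inter_right_comm, inter_comm s, h x hx]
  rw [hX.pr_eq_add (s ∩ E), hX.pr_eq_add s, hx 0 (Or.inl rfl), hx 1 (Or.inr rfl), add_mul]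

lemma pr_inter_eq_affine [IsFiniteMeasure P] (hB : IsBin B) {S E : Set Ω} {q : ℝ → ℝ}
    (h : ∀ b : ℝ, (b = 0 ∨ b = 1) → pr P (S ∩ ev B b ∩ E) = pr P (S ∩ ev B b) * q b) :
    pr P (S ∩ E) = q 0 * pr P S + (q 1 - q 0) * pr P (S ∩ ev B 1) := by
  rw [hB.pr_eq_add (S ∩ E), hB.pr_eq_add S, inter_right_comm S E, inter_right_comm S E,
    h 0 (Or.inl rfl), h 1 (Or.inr rfl)]
  ring

theorem rcov_eq_mul_rcov_of_condIndep [IsProbabilityMeasure P] (hX : IsBin X) (hB : IsBin B)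
    (hY : IsBin Y) (q : ℝ → ℝ)
    (h : ∀ x b : ℝ, (x = 0 ∨ x = 1) → (b = 0 ∨ b = 1) →
      pr P (ev X x ∩ ev B b ∩ ev Y 1) = pr P (ev X x ∩ ev B b) * q b) :
    rcov P X Y = (q 1 - q 0) * rcov P X B := by
  have hY1 : pr P (ev Y 1) = q 0 + (q 1 - q 0) * pr P (ev B 1) := by
    have := pr_inter_eq_affine hB (S := univ) (E := ev Y 1) fun b hb => by
      simpa only [univ_inter] using pr_inter_eq_mul_of_forall_ev hX fun x hx => h x b hx hb
    simpa only [univ_inter, pr, measure_univ, ENNReal.toReal_one, mul_one] using this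
  have hXY1 := pr_inter_eq_affine hB (S := ev X 1) (E := ev Y 1) fun b hb => h 1 b (Or.inr rfl) hb
  rw [hX.rcov_eq hY, hX.rcov_eq hB, hXY1, hY1]
  ring

theorem rightM_bias_cov_general (P : Measure Ω) [IsProbabilityMeasure P]
    (X B C Y : Ω → ℝ) (hX : IsBin X) (hB : IsBin B) (hC : IsBin C) (hY : IsBin Y)
    (hfact : ∀ x b γ y : ℝ, (x = 0 ∨ x = 1) → (b = 0 ∨ b = 1) → (γ = 0 ∨ γ = 1) →
      (y = 0 ∨ y = 1) →
      pr P (ev X x ∩ ev B b ∩ ev C γ ∩ ev Y y) =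
        pr P (ev X x) * pr P (ev B b) * cpr P (ev C γ) (ev X x ∩ ev B b) *
          cpr P (ev Y y) (ev B b))
    (c : ℝ) (hc : c = 0 ∨ c = 1) (hCc : 0 < pr P (ev C c)) :
    covCond P X Y (ev C c) =
      (cpr P (ev Y 1) (ev B 1) - cpr P (ev Y 1) (ev B 0)) * covCond P X B (ev C c) := by
  have hT : MeasurableSet (ev C c) := hC.measurableSet_ev c
  have : IsProbabilityMeasure (P[|ev C c]) :=
    cond_isProbabilityMeasure fun h => by simp [pr, h] at hCc
  refine rcov_eq_mul_rcov_of_condIndep hX hB hY (fun b => cpr P (ev Y 1) (ev B b))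
    fun x b hx hb => pr_cond_inter_eq_mul hT ?_
  exact pr_inter_ev_eq_pr_mul_cpr hY (fun y hy => hfact x b c y hx hb hc hy) (Or.inr rfl)

/-- Right-sided M structure: the extended collider bias on the covariance scale equals the
embedded V-bias times the risk difference for the effect of `B` on `Y`. -/
theorem rightM_bias_cov (P : Measure Ω) [IsProbabilityMeasure P]
    (X B C Y : Ω → ℝ) (hX : IsBin X) (hB : IsBin B) (hC : IsBin C) (hY : IsBin Y)
    (hX1 : 0 < pr P (ev X 1)) (hX1' : pr P (ev X 1) < 1)
    (hB1 : 0 < pr P (ev B 1)) (hB1' : pr P (ev B 1) < 1)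
    (hfact : ∀ x b γ y : ℝ, (x = 0 ∨ x = 1) → (b = 0 ∨ b = 1) → (γ = 0 ∨ γ = 1) →
      (y = 0 ∨ y = 1) →
      pr P (ev X x ∩ ev B b ∩ ev C γ ∩ ev Y y) =
        pr P (ev X x) * pr P (ev B b) * cpr P (ev C γ) (ev X x ∩ ev B b) *
          cpr P (ev Y y) (ev B b))
    (c : ℝ) (hc : c = 0 ∨ c = 1) (hCc : 0 < pr P (ev C c)) :
    covCond P X Y (ev C c) =
      (cpr P (ev Y 1) (ev B 1) - cpr P (ev Y 1) (ev B 0)) * covCond P X B (ev C c) :=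
  rightM_bias_cov_general P X B C Y hX hB hC hY hfact c hc hCc
end

section
/- Assume the V structure with P(X=x, C=c) > 0 for all x, c ∈ {0,1}. Define the stratum-specific risk differences RD(c) := P(Y=1 | X=1, C=c) − P(Y=1 | X=0, C=c), and the weights w_c := var(X | C=c)·P(C=c) / [ var(X | C=1)·P(C=1) + var(X | C=0)·P(C=0) ] for c ∈ {0,1}. Then the linear-regression-adjusted risk difference w_1·RD(1) + w_0·RD(0) equals − [ P(X=1)·( p_{C=1|11} − p_{C=1|10} ) + P(X=0)·( p_{C=1|01} − p_{C=1|00} ) ] · [ P(Y=1)·( p_{C=1|11} − p_{C=1|01} ) + P(Y=0)·( p_{C=1|10} − p_{C=1|00} ) ] · P(Y=1)·P(Y=0) / [ P(X=1)·( p_{C=1|11}·P(Y=1) + p_{C=1|10}·P(Y=0) )·( p_{C=0|11}·P(Y=1) + p_{C=0|10}·P(Y=0) ) + P(X=0)·( p_{C=1|01}·P(Y=1) + p_{C=1|00}·P(Y=0) )·( p_{C=0|01}·P(Y=1) + p_{C=0|00}·P(Y=0) ) ]. -/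
open MeasureTheory ProbabilityTheory

variable {Ω : Type*} [MeasurableSpace Ω]

/-- The stratum-specific risk difference of `Y` comparing `X = 1` with `X = 0` within the
stratum `Z = z`. -/
noncomputable def strataRD (P : Measure Ω) (X Y Z : Ω → ℝ) (z : ℝ) : ℝ :=
  cpr P (ev Y 1) (ev X 1 ∩ ev Z z) - cpr P (ev Y 1) (ev X 0 ∩ ev Z z)

/-- The linear-regression weight of the stratum `Z = z`, proportional to
`var(X | Z = z) * P(Z = z)`. -/
noncomputable def strataW (P : Measure Ω) (X Z : Ω → ℝ) (z : ℝ) : ℝ :=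
  varCond P X (ev Z z) * pr P (ev Z z) /
    (varCond P X (ev Z 1) * pr P (ev Z 1) + varCond P X (ev Z 0) * pr P (ev Z 0))

/-!
Within a stratum `C = c`, `var(X | C = c) · P(C = c) = P(X = 1, C = c) P(X = 0, C = c) / P(C = c)`,
and multiplying it by the risk difference gives the cross-product difference of the cells
`P(X = x, Y = y, C = c)` over `P(C = c)`; so the adjusted risk difference is a ratio of two sums of
fractions over `P(C = 1)` and `P(C = 0)`. Independence of `X` and `Y` makes every cell equal to
`p_{C=c|xy} P(X = x) P(Y = y)`. Clearing the denominators `P(C = 1)`, `P(C = 0)` and the common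
factor `P(X = 1) P(X = 0)` leaves a polynomial identity in `P(X = 1)`, `P(Y = 1)` and the four
`p_{C=1|xy}`, once `P(X = 0)`, `P(Y = 0)` and `p_{C=0|xy}` are written as complements.
-/

section Binary

variable {X : Ω → ℝ}

lemma IsBin.measurableSet_ev_s17 (hX : IsBin X) (x : ℝ) : MeasurableSet (ev X x) :=
  hX.1 (measurableSet_singleton x)

lemma IsBin.ev_zero_eq_compl_s17 (hX : IsBin X) : ev X 0 = (ev X 1)ᶜ := by
  ext ω
  rcases hX.2 ω with h | h <;> simp [ev, h]

lemma IsBin.eq_indicator_s17 (hX : IsBin X) : X = (ev X 1).indicator 1 := by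
  funext ω
  rcases hX.2 ω with h | h <;> simp [ev, Set.indicator, h]

lemma IsBin.pr_zero (P : Measure Ω) [IsProbabilityMeasure P] (hX : IsBin X) :
    pr P (ev X 0) = 1 - pr P (ev X 1) := by
  rw [hX.ev_zero_eq_compl_s17]
  exact probReal_compl_eq_one_sub (hX.measurableSet_ev_s17 1)

lemma IsBin.pr_split (P : Measure Ω) [IsFiniteMeasure P] (hX : IsBin X) (s : Set Ω) :
    pr P s = pr P (ev X 1 ∩ s) + pr P (ev X 0 ∩ s) := by
  rw [hX.ev_zero_eq_compl_s17, Set.inter_comm (ev X 1), Set.inter_comm _ s, ← Set.sdiff_eq]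
  exact (measureReal_inter_add_sdiff (hX.measurableSet_ev_s17 1)).symm

lemma IsBin.integral_eq (Q : Measure Ω) (hX : IsBin X) : ∫ ω, X ω ∂Q = pr Q (ev X 1) := by
  conv_lhs => rw [hX.eq_indicator_s17]
  exact integral_indicator_one (hX.measurableSet_ev_s17 1)

lemma IsBin.integrable (Q : Measure Ω) [IsFiniteMeasure Q] (hX : IsBin X) : Integrable X Q := by
  rw [hX.eq_indicator_s17]
  exact (integrable_const 1).indicator (hX.measurableSet_ev_s17 1)

lemma IsBin.rcov_self (Q : Measure Ω) [IsProbabilityMeasure Q] (hX : IsBin X) :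
    rcov Q X X = pr Q (ev X 1) * pr Q (ev X 0) := by
  set m := pr Q (ev X 1)
  have hsq : (fun ω => (X ω - ∫ ω', X ω' ∂Q) * (X ω - ∫ ω', X ω' ∂Q))
      = fun ω => (1 - 2 * m) * X ω + m ^ 2 := by
    rw [hX.integral_eq]
    funext ω
    rcases hX.2 ω with h | h <;> rw [h] <;> ring
  rw [rcov, hsq, integral_add ((hX.integrable Q).const_mul _) (integrable_const _),
    integral_const_mul, hX.integral_eq, integral_const, hX.pr_zero Q]
  simp only [probReal_univ, one_smul]
  ring

end Binary

section Conditioning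

variable {P : Measure Ω} {s t : Set Ω}

lemma cpr_eq_div (ht : MeasurableSet t) : cpr P s t = pr P (t ∩ s) / pr P t := by
  rw [cpr, pr, cond_apply ht, ENNReal.toReal_mul, ENNReal.toReal_inv, pr, pr, inv_mul_eq_div]

lemma cpr_mul_pr [IsFiniteMeasure P] (ht : MeasurableSet t) :
    cpr P s t * pr P t = pr P (t ∩ s) := by
  rw [cpr, pr, pr, pr, ← ENNReal.toReal_mul, cond_mul_eq_inter ht]

lemma isProbabilityMeasure_cond_of_pr_ne_zero [IsFiniteMeasure P] (hpt : pr P t ≠ 0) :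
    IsProbabilityMeasure (P[|t]) :=
  cond_isProbabilityMeasure fun h => hpt (by rw [pr, h, ENNReal.toReal_zero])

lemma IsBin.cpr_zero [IsFiniteMeasure P] {X : Ω → ℝ} (hX : IsBin X) (hpt : pr P t ≠ 0) :
    cpr P (ev X 0) t = 1 - cpr P (ev X 1) t :=
  have := isProbabilityMeasure_cond_of_pr_ne_zero hpt
  hX.pr_zero (P[|t])

lemma varCond_mul_pr [IsFiniteMeasure P] {X : Ω → ℝ} (hX : IsBin X) (ht : MeasurableSet t)
    (hpt : pr P t ≠ 0) :
    varCond P X t * pr P t = pr P (ev X 1 ∩ t) * pr P (ev X 0 ∩ t) / pr P t := by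
  have := isProbabilityMeasure_cond_of_pr_ne_zero hpt
  rw [varCond, covCond, hX.rcov_self (P[|t]), ← cpr, ← cpr, cpr_eq_div ht, cpr_eq_div ht,
    Set.inter_comm t, Set.inter_comm t]
  field_simp

lemma varCond_mul_pr_mul_sub [IsFiniteMeasure P] {X : Ω → ℝ} (hX : IsBin X)
    (ht : MeasurableSet t) (h₁ : 0 < pr P (ev X 1 ∩ t)) (h₀ : 0 < pr P (ev X 0 ∩ t)) :
    varCond P X t * pr P t * (cpr P s (ev X 1 ∩ t) - cpr P s (ev X 0 ∩ t)) =
      (pr P (ev X 1 ∩ s ∩ t) * pr P (ev X 0 ∩ t) - pr P (ev X 0 ∩ s ∩ t) * pr P (ev X 1 ∩ t)) /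
        pr P t := by
  have hpt : pr P t ≠ 0 := by rw [hX.pr_split P t]; positivity
  rw [varCond_mul_pr hX ht hpt, cpr_eq_div ((hX.measurableSet_ev_s17 1).inter ht),
    cpr_eq_div ((hX.measurableSet_ev_s17 0).inter ht), Set.inter_right_comm _ t,
    Set.inter_right_comm _ t]
  field_simp

end Conditioning

lemma strataW_mul_add_strataW_mul (P : Measure Ω) (X Z : Ω → ℝ) (r₁ r₀ : ℝ) :
    strataW P X Z 1 * r₁ + strataW P X Z 0 * r₀ =
      (varCond P X (ev Z 1) * pr P (ev Z 1) * r₁ + varCond P X (ev Z 0) * pr P (ev Z 0) * r₀) /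
        (varCond P X (ev Z 1) * pr P (ev Z 1) + varCond P X (ev Z 0) * pr P (ev Z 0)) := by
  simp only [strataW]
  ring

section Independent

variable {P : Measure Ω} {X Y : Ω → ℝ}

lemma pr_ev_inter_ev_of_indepFun (hXY : IndepFun X Y P) (x y : ℝ) :
    pr P (ev X x ∩ ev Y y) = pr P (ev X x) * pr P (ev Y y) := by
  rw [pr, pr, pr, ← ENNReal.toReal_mul]
  exact congrArg ENNReal.toReal
    (hXY.measure_inter_preimage_eq_mul _ _ (measurableSet_singleton x) (measurableSet_singleton y))

lemma pr_ev_inter_ev_inter_of_indepFun [IsFiniteMeasure P] (hX : Measurable X) (hY : Measurable Y)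
    (hXY : IndepFun X Y P) (x y : ℝ) (s : Set Ω) :
    pr P (ev X x ∩ ev Y y ∩ s) = cpr P s (ev X x ∩ ev Y y) * (pr P (ev X x) * pr P (ev Y y)) := by
  rw [← cpr_mul_pr (t := ev X x ∩ ev Y y)
      ((hX (measurableSet_singleton x)).inter (hY (measurableSet_singleton y))),
    pr_ev_inter_ev_of_indepFun hXY]

lemma pr_ev_inter_of_indepFun [IsFiniteMeasure P] (hX : Measurable X) (hY : IsBin Y)
    (hXY : IndepFun X Y P) (x : ℝ) (s : Set Ω) :
    pr P (ev X x ∩ s) = pr P (ev X x) *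
      (cpr P s (ev X x ∩ ev Y 1) * pr P (ev Y 1) + cpr P s (ev X x ∩ ev Y 0) * pr P (ev Y 0)) := by
  rw [hY.pr_split P, Set.inter_left_comm, Set.inter_left_comm (ev Y 0), ← Set.inter_assoc,
    ← Set.inter_assoc, pr_ev_inter_ev_inter_of_indepFun hX hY.1 hXY,
    pr_ev_inter_ev_inter_of_indepFun hX hY.1 hXY]
  ring

end Independent

lemma div_add_div_div_div_add_div_eq {s₁ s₀ v₁ v₀ k₁ k₀ e n d : ℝ} (hk₁ : k₁ ≠ 0) (hk₀ : k₀ ≠ 0)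
    (he : e ≠ 0) (hs : s₁ * k₀ + s₀ * k₁ = e * n) (hv : v₁ * k₀ + v₀ * k₁ = e * d) :
    (s₁ / k₁ + s₀ / k₀) / (v₁ / k₁ + v₀ / k₀) = n / d := by
  rw [div_add_div _ _ hk₁ hk₀, div_add_div _ _ hk₁ hk₀,
    div_div_div_cancel_right₀ (mul_ne_zero hk₁ hk₀), mul_comm k₁, mul_comm k₁, hs, hv,
    mul_div_mul_left _ _ he]

/-- V-bias due to linear regression adjustment for `C`. -/
theorem V_bias_lm (P : Measure Ω) [IsProbabilityMeasure P]
    (X Y C : Ω → ℝ) (hX : IsBin X) (hY : IsBin Y) (hC : IsBin C)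
    (hindep : IndepFun X Y P)
    (hX1 : 0 < pr P (ev X 1)) (hX1' : pr P (ev X 1) < 1)
    (hY1 : 0 < pr P (ev Y 1)) (hY1' : pr P (ev Y 1) < 1)
    (hXC : ∀ x c : ℝ, (x = 0 ∨ x = 1) → (c = 0 ∨ c = 1) → 0 < pr P (ev X x ∩ ev C c)) :
    strataW P X C 1 * strataRD P X Y C 1 + strataW P X C 0 * strataRD P X Y C 0 =
      -((pr P (ev X 1) *
            (cpr P (ev C 1) (ev X 1 ∩ ev Y 1) - cpr P (ev C 1) (ev X 1 ∩ ev Y 0)) +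
          pr P (ev X 0) *
            (cpr P (ev C 1) (ev X 0 ∩ ev Y 1) - cpr P (ev C 1) (ev X 0 ∩ ev Y 0))) *
        (pr P (ev Y 1) *
            (cpr P (ev C 1) (ev X 1 ∩ ev Y 1) - cpr P (ev C 1) (ev X 0 ∩ ev Y 1)) +
          pr P (ev Y 0) *
            (cpr P (ev C 1) (ev X 1 ∩ ev Y 0) - cpr P (ev C 1) (ev X 0 ∩ ev Y 0))) *
        pr P (ev Y 1) * pr P (ev Y 0) /
        (pr P (ev X 1) *
            (cpr P (ev C 1) (ev X 1 ∩ ev Y 1) * pr P (ev Y 1) +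
              cpr P (ev C 1) (ev X 1 ∩ ev Y 0) * pr P (ev Y 0)) *
            (cpr P (ev C 0) (ev X 1 ∩ ev Y 1) * pr P (ev Y 1) +
              cpr P (ev C 0) (ev X 1 ∩ ev Y 0) * pr P (ev Y 0)) +
          pr P (ev X 0) *
            (cpr P (ev C 1) (ev X 0 ∩ ev Y 1) * pr P (ev Y 1) +
              cpr P (ev C 1) (ev X 0 ∩ ev Y 0) * pr P (ev Y 0)) *
            (cpr P (ev C 0) (ev X 0 ∩ ev Y 1) * pr P (ev Y 1) +
              cpr P (ev C 0) (ev X 0 ∩ ev Y 0) * pr P (ev Y 0)))) := by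
  have hX0 : 0 < pr P (ev X 0) := by rw [hX.pr_zero P]; linarith
  have hY0 : 0 < pr P (ev Y 0) := by rw [hY.pr_zero P]; linarith
  have hC_pos (c : ℝ) (hc : c = 0 ∨ c = 1) : pr P (ev C c) ≠ 0 := by
    rw [hX.pr_split P]
    exact (add_pos (hXC 1 c (.inr rfl) hc) (hXC 0 c (.inl rfl) hc)).ne'
  have hC_zero (x y : ℝ) (hx : 0 < pr P (ev X x)) (hy : 0 < pr P (ev Y y)) :
      cpr P (ev C 0) (ev X x ∩ ev Y y) = 1 - cpr P (ev C 1) (ev X x ∩ ev Y y) :=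
    hC.cpr_zero (by rw [pr_ev_inter_ev_of_indepFun hindep]; positivity)
  rw [strataW_mul_add_strataW_mul, strataRD, strataRD,
    varCond_mul_pr_mul_sub hX (hC.measurableSet_ev_s17 1) (hXC 1 1 (.inr rfl) (.inr rfl))
      (hXC 0 1 (.inl rfl) (.inr rfl)),
    varCond_mul_pr_mul_sub hX (hC.measurableSet_ev_s17 0) (hXC 1 0 (.inr rfl) (.inl rfl))
      (hXC 0 0 (.inl rfl) (.inl rfl)),
    varCond_mul_pr hX (hC.measurableSet_ev_s17 1) (hC_pos 1 (.inr rfl)),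
    varCond_mul_pr hX (hC.measurableSet_ev_s17 0) (hC_pos 0 (.inl rfl)), ← neg_div]
  refine div_add_div_div_div_add_div_eq (hC_pos 1 (.inr rfl)) (hC_pos 0 (.inl rfl))
    (mul_pos hX1 hX0).ne' ?_ ?_ <;>
  · rw [hX.pr_split P (ev C 1), hX.pr_split P (ev C 0)]
    simp only [pr_ev_inter_ev_inter_of_indepFun hX.1 hY.1 hindep,
      pr_ev_inter_of_indepFun hX.1 hY hindep]
    rw [hC_zero 1 1 hX1 hY1, hC_zero 1 0 hX1 hY0, hC_zero 0 1 hX0 hY1, hC_zero 0 0 hX0 hY0,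
      hX.pr_zero P, hY.pr_zero P]
    ring
end
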